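/- arXiv:2302.05939 — 5 statements merged into one kernel-verified Lean document; each statement's English description precedes it below -/
import Mathlib

section
/- Let G be a group and 𝒢 = {g₁, …, gₐ} a finite subset of G. The semigroup generated by 𝒢 is a group if and only if the neutral element of G can be written as a product of elements of 𝒢 (with repetition allowed) in which every element of 𝒢 occurs at least once. -/
/-! The identity is a full-image word as soon as the semigroup contains the inverse of the
product of all generators. Conversely, a full-image word `u ++ g :: v` with product `1` exhibits
`g⁻¹` as the product of the rotated word `v ++ u`, and a semigroup containing `1` and the
inverses of its generators is the subgroup they generate. -/

namespace Subsemigroup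

variable {M : Type*} [Monoid M] {s : Set M}

theorem list_prod_mem_closure :
    ∀ {l : List M}, l ≠ [] → (∀ x ∈ l, x ∈ s) → l.prod ∈ closure s
  | [], hl, _ => absurd rfl hl
  | [a], _, hs => by simpa using subset_closure (hs a (by simp))
  | a :: b :: l, _, hs => by
      rw [List.prod_cons]
      exact mul_mem (subset_closure (hs a (by simp)))
        (list_prod_mem_closure (by simp) fun x hx => hs x (List.mem_cons_of_mem a hx))

theorem list_prod_mem_closure_of_one_mem (h1 : (1 : M) ∈ closure s) {l : List M}
    (hs : ∀ x ∈ l, x ∈ s) : l.prod ∈ closure s := by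
  rcases eq_or_ne l [] with rfl | hl
  · exact h1
  · exact list_prod_mem_closure hl hs

theorem exists_list_of_mem_closure {x : M} (hx : x ∈ closure s) :
    ∃ l : List M, l ≠ [] ∧ (∀ y ∈ l, y ∈ s) ∧ l.prod = x := by
  induction hx using closure_induction with
  | mem z hz => exact ⟨[z], by simp, by simpa using hz, by simp⟩
  | mul a b _ _ iha ihb =>
      obtain ⟨la, hla, hsa, rfl⟩ := iha
      obtain ⟨lb, -, hsb, rfl⟩ := ihb
      exact ⟨la ++ lb, by simp [hla], List.forall_mem_append.2 ⟨hsa, hsb⟩, List.prod_append⟩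

theorem coe_closure_eq_subgroup_closure {G : Type*} [Group G] {s : Set G}
    (h1 : (1 : G) ∈ closure s) (hinv : ∀ g ∈ s, g⁻¹ ∈ closure s) :
    (closure s : Set G) = Subgroup.closure s := by
  apply subset_antisymm
  · exact closure_le (S := (Subgroup.closure s).toSubmonoid.toSubsemigroup).2
      Subgroup.subset_closure
  · let T : Submonoid G := { closure s with one_mem' := h1 }
    rw [← Subgroup.coe_toSubmonoid, Subgroup.closure_toSubmonoid]
    refine Submonoid.closure_le (S := T) |>.2 (Set.union_subset subset_closure fun g hg => ?_)
    exact (inv_inv g ▸ hinv g⁻¹ hg : g ∈ closure s)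

end Subsemigroup

theorem inv_eq_prod_append_of_prod_append_cons_eq_one {G : Type*} [Group G] {u v : List G}
    {g : G} (h : (u ++ g :: v).prod = 1) : g⁻¹ = (v ++ u).prod := by
  rw [List.prod_append, List.prod_cons, mul_eq_one_comm, mul_assoc] at h
  rw [List.prod_append, inv_eq_of_mul_eq_one_right h]

/-- The semigroup generated by a finite set `𝒢` in a group `G` is a group (i.e. coincides
with the subgroup generated by `𝒢`) iff the identity is represented by a full-image word:
a product of elements of `𝒢` in which every element of `𝒢` occurs at least once. -/
theorem stmt0 {G : Type*} [Group G] (𝒢 : Finset G) :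
    (Subsemigroup.closure (𝒢 : Set G) : Set G) = (Subgroup.closure (𝒢 : Set G) : Set G) ↔
      ∃ w : List G, w ≠ [] ∧ (∀ x ∈ w, x ∈ 𝒢) ∧ (∀ g ∈ 𝒢, g ∈ w) ∧ w.prod = 1 := by
  constructor
  · intro h
    have hL : ∀ x ∈ 𝒢.toList, x ∈ (𝒢 : Set G) := fun x hx => Finset.mem_toList.1 hx
    have hinv : 𝒢.toList.prod⁻¹ ∈ Subsemigroup.closure (𝒢 : Set G) := by
      rw [← SetLike.mem_coe, h]
      exact inv_mem (list_prod_mem fun x hx => Subgroup.subset_closure (hL x hx))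
    obtain ⟨u, hu, hus, hprod⟩ := Subsemigroup.exists_list_of_mem_closure hinv
    exact ⟨u ++ 𝒢.toList, by simp [hu], List.forall_mem_append.2 ⟨hus, hL⟩,
      fun g hg => by simp [hg], by simp [hprod]⟩
  · rintro ⟨w, hw, hws, hfull, hprod⟩
    have h1 : (1 : G) ∈ Subsemigroup.closure (𝒢 : Set G) :=
      hprod ▸ Subsemigroup.list_prod_mem_closure hw hws
    refine Subsemigroup.coe_closure_eq_subgroup_closure h1 fun g hg => ?_
    obtain ⟨u, v, rfl⟩ := List.append_of_mem (hfull g hg)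
    rw [inv_eq_prod_append_of_prod_append_cons_eq_one hprod]
    exact Subsemigroup.list_prod_mem_closure_of_one_mem h1 fun x hx => hws x <| by
      rcases List.mem_append.1 hx with hx | hx <;> simp [hx]
end

section
/- Let d = gcd(b_i, |b_j|) where b_i > 0 and b_j < 0. In the group ℚ(X) ⋊ ℤ of pairs (y, b) with y ∈ ℚ(X), b ∈ ℤ and multiplication (y,b)·(y',b') = (y + X^b y', b+b'), define h = y_i/(1 + X^d + ⋯ + X^{b_i−d}) + y_j/(X^{−d} + X^{−2d} + ⋯ + X^{−|b_j|}). Then (y_i, b_i)^{|b_j|} · (y_j, b_j)^{b_i} = (h · (1 + X^d + ⋯ + X^{b_i|b_j|−d}), 0). -/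
/-!
Write `r = X^d`, `b_i = d e` and `b_j = -d f`. Since `(y, b)^n = (y (1 + X^b + ⋯ + X^{(n-1)b}), n b)`,
the claim is an identity between geometric sums in `r`. It follows from the factorisation
`1 + r + ⋯ + r^{em-1} = (1 + ⋯ + r^{e-1}) (1 + r^e + ⋯ + r^{e(m-1)})`, used for `r` and for `r⁻¹`,
and from `r^n (r⁻¹ + ⋯ + r^{-n}) = 1 + ⋯ + r^{n-1}`. The denominators do not vanish because `X` is
transcendental, so `X^n ≠ 1` for `n > 0`.
-/

/-- Multiplication of the group `ℚ(X) ⋊ ℤ` on pairs `(y, b)`, `y ∈ ℚ(X)`, `b ∈ ℤ`: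
`(y,b)·(y',b') = (y + X^b y', b+b')`. -/
noncomputable def qmul (p q : RatFunc ℚ × ℤ) : RatFunc ℚ × ℤ :=
  (p.1 + RatFunc.X ^ p.2 * q.1, p.2 + q.2)

/-- `n`-th power in `ℚ(X) ⋊ ℤ`. -/
noncomputable def qpow (a : RatFunc ℚ × ℤ) : ℕ → RatFunc ℚ × ℤ
  | 0 => (0, 0)
  | n + 1 => qmul a (qpow a n)

open Finset

theorem qpow_eq_geom_sum (y : RatFunc ℚ) (b : ℤ) (n : ℕ) :
    qpow (y, b) n = (y * ∑ k ∈ range n, (RatFunc.X ^ b) ^ k, n * b) := by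
  induction n with
  | zero => simp [qpow]
  | succ n ih =>
    rw [qpow, ih, qmul, geom_sum_succ]
    ext <;> push_cast <;> ring

theorem geom_sum_range_mul {R : Type*} [Semiring R] (x : R) (m n : ℕ) :
    ∑ k ∈ range (m * n), x ^ k = (∑ k ∈ range m, x ^ k) * ∑ k ∈ range n, (x ^ m) ^ k := by
  induction n with
  | zero => simp
  | succ n ih =>
    rw [Nat.mul_succ, sum_range_add, ih, geom_sum_succ', mul_add, add_comm]
    simp only [add_comm (m * n), pow_add, ← sum_mul, ← pow_mul]

theorem pow_mul_sum_inv_pow_succ {K : Type*} [DivisionRing K] {x : K} (hx : x ≠ 0) (n : ℕ) :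
    x ^ n * ∑ k ∈ range n, x⁻¹ ^ (k + 1) = ∑ k ∈ range n, x ^ k := by
  induction n with
  | zero => simp
  | succ n ih =>
    rw [sum_range_succ, mul_add, pow_succ', mul_assoc, ih, ← pow_succ', inv_pow,
      mul_inv_cancel₀ (pow_ne_zero _ hx), geom_sum_succ]

theorem geom_sum_semidirect_identity {K : Type*} [Field K] {r : K} (hr : r ≠ 0) {e f m n : ℕ}
    (hmn : e * m = f * n) (he : ∑ k ∈ range e, r ^ k ≠ 0) (hf : ∑ k ∈ range f, r ^ k ≠ 0)
    (y z : K) :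
    y * ∑ k ∈ range m, (r ^ e) ^ k + (r ^ e) ^ m * (z * ∑ k ∈ range n, (r ^ f)⁻¹ ^ k) =
      (y / ∑ k ∈ range e, r ^ k + z / ∑ k ∈ range f, r⁻¹ ^ (k + 1)) *
        ∑ k ∈ range (e * m), r ^ k := by
  set B := ∑ k ∈ range f, r⁻¹ ^ (k + 1)
  have hB : B ≠ 0 := right_ne_zero_of_mul (pow_mul_sum_inv_pow_succ hr f ▸ hf)
  have hshift : B * ∑ k ∈ range n, (r⁻¹ ^ f) ^ k = ∑ k ∈ range (f * n), r⁻¹ ^ (k + 1) := by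
    simp only [B, pow_succ, ← sum_mul, geom_sum_range_mul]
    ring
  have hfirst : (y / ∑ k ∈ range e, r ^ k) * ∑ k ∈ range (e * m), r ^ k =
      y * ∑ k ∈ range m, (r ^ e) ^ k := by
    rw [geom_sum_range_mul, ← mul_assoc, div_mul_cancel₀ y he]
  have hsecond : z / B * ∑ k ∈ range (e * m), r ^ k =
      (r ^ e) ^ m * (z * ∑ k ∈ range n, (r ^ f)⁻¹ ^ k) := by
    rw [hmn, ← pow_mul_sum_inv_pow_succ hr, ← hshift, ← hmn, pow_mul, inv_pow]
    field_simp
  rw [add_mul, hfirst, hsecond]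

theorem RatFunc.X_pow_ne_one {K : Type*} [CommRing K] [IsDomain K] {n : ℕ} (hn : 0 < n) :
    (RatFunc.X : RatFunc K) ^ n ≠ 1 := fun h =>
  RatFunc.transcendental_X.pow hn (h ▸ isAlgebraic_one)

theorem RatFunc.geom_sum_X_pow_ne_zero {K : Type*} [CommRing K] [IsDomain K] {d e : ℕ}
    (hd : 0 < d) (he : 0 < e) :
    ∑ k ∈ range e, ((RatFunc.X : RatFunc K) ^ d) ^ k ≠ 0 := by
  refine left_ne_zero_of_mul (b := (RatFunc.X : RatFunc K) ^ d - 1) ?_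
  rw [geom_sum_mul, ← pow_mul]
  exact sub_ne_zero.mpr (RatFunc.X_pow_ne_one (Nat.mul_pos hd he))

theorem qmul_qpow_qpow_of_dvd (yi yj : RatFunc ℚ) {bi bj d : ℤ} (hbi : 0 < bi) (hbj : bj < 0)
    (hd : 0 < d) (hdi : d ∣ bi) (hdj : d ∣ bj) :
    qmul (qpow (yi, bi) (-bj).toNat) (qpow (yj, bj) bi.toNat) =
      ((yi / (∑ k ∈ Finset.range (bi / d).toNat, RatFunc.X ^ ((k : ℤ) * d)) +
        yj / (∑ k ∈ Finset.range ((-bj) / d).toNat, RatFunc.X ^ (-((k : ℤ) + 1) * d))) *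
        (∑ k ∈ Finset.range ((bi * (-bj)) / d).toNat, RatFunc.X ^ ((k : ℤ) * d)), 0) := by
  obtain ⟨e, rfl⟩ := hdi
  obtain ⟨f, rfl⟩ := hdj
  lift d to ℕ using hd.le
  have he := pos_of_mul_pos_right hbi hd.le
  have hf := neg_of_mul_neg_right hbj hd.le
  lift e to ℕ using he.le
  obtain ⟨f, rfl⟩ : ∃ f' : ℕ, f = -f' := ⟨(-f).toNat, by omega⟩
  set r : RatFunc ℚ := RatFunc.X ^ d
  have hX : ∀ k : ℕ, (RatFunc.X : RatFunc ℚ) ^ ((k * d : ℕ) : ℤ) = r ^ k := fun k => by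
    rw [zpow_natCast, pow_mul']
  have hXinv : ∀ k : ℕ, (RatFunc.X : RatFunc ℚ) ^ (-((k : ℤ) + 1) * d) = r⁻¹ ^ (k + 1) :=
    fun k => by rw [neg_mul, zpow_neg, ← Nat.cast_succ, ← Nat.cast_mul, hX, inv_pow]
  simp only [mul_neg, neg_neg, ← Nat.cast_mul, mul_assoc, ← Int.natCast_div,
    Nat.mul_div_cancel_left _ (Int.natCast_pos.mp hd), Int.toNat_natCast, qpow_eq_geom_sum, qmul,
    hX, hXinv]
  have hXbi : (RatFunc.X : RatFunc ℚ) ^ ((d * e : ℕ) : ℤ) = r ^ e := by rw [zpow_natCast, pow_mul]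
  have hXbj : (RatFunc.X : RatFunc ℚ) ^ (-((d * f : ℕ) : ℤ)) = (r ^ f)⁻¹ := by
    rw [zpow_neg, zpow_natCast, pow_mul]
  have hXprod : (RatFunc.X : RatFunc ℚ) ^ ((d * (f * (d * e)) : ℕ) : ℤ) = (r ^ e) ^ (d * f) := by
    rw [zpow_natCast, ← pow_mul, ← pow_mul]
    ring_nf
  refine Prod.ext ?_ (by push_cast; ring)
  rw [hXbi, hXbj, hXprod]
  exact geom_sum_semidirect_identity (pow_ne_zero _ RatFunc.X_ne_zero) (by ring)
    (RatFunc.geom_sum_X_pow_ne_zero (by omega) (by omega))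
    (RatFunc.geom_sum_X_pow_ne_zero (by omega) (by omega)) yi yj

/-- With `d = gcd(b_i, |b_j|)`, `b_i > 0 > b_j`, and
`h = y_i/(1 + X^d + ⋯ + X^{b_i−d}) + y_j/(X^{−d} + X^{−2d} + ⋯ + X^{−|b_j|})`, we have
`(y_i, b_i)^{|b_j|} · (y_j, b_j)^{b_i} = (h·(1 + X^d + ⋯ + X^{b_i|b_j|−d}), 0)`. -/
theorem stmt4 (yi yj : RatFunc ℚ) (bi bj : ℤ) (hbi : 0 < bi) (hbj : bj < 0)
    (d : ℤ) (hd : d = (Int.gcd bi bj : ℤ)) :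
    qmul (qpow (yi, bi) (-bj).toNat) (qpow (yj, bj) bi.toNat) =
      ((yi / (∑ k ∈ Finset.range (bi / d).toNat, RatFunc.X ^ ((k : ℤ) * d)) +
        yj / (∑ k ∈ Finset.range ((-bj) / d).toNat, RatFunc.X ^ (-((k : ℤ) + 1) * d))) *
        (∑ k ∈ Finset.range ((bi * (-bj)) / d).toNat, RatFunc.X ^ ((k : ℤ) * d)), 0) := by
  have hd_pos : 0 < d := hd ▸ Int.natCast_pos.mpr (Int.gcd_pos_of_ne_zero_left bj hbi.ne')
  exact qmul_qpow_qpow_of_dvd yi yj hbi hbj hd_pos (hd ▸ Int.gcd_dvd_left bi bj)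
    (hd ▸ Int.gcd_dvd_right bi bj)
end

section
/- Let f be a nonzero Laurent polynomial with nonnegative real coefficients, and let M, N be positive integers. Then for all sufficiently large n, every coefficient of X^k in (X^{−M} + X^{−M+1} + ⋯ + X^N)^n · f is strictly positive for all k between the negative degree and positive degree of this product (i.e., the product is gap-free). -/
/-!
The `n`-th power of `g = X^{-M} + ⋯ + X^N` has nonnegative coefficients, positive exactly on
`[-nM, nN]`. If `p₀ ≤ q₀` are the extreme exponents of `f`, then `gⁿ f` has coefficients
`≥ gⁿ(k - p₀) f(p₀)` and `≥ gⁿ(k - q₀) f(q₀)`, since nonnegativity rules out cancellation.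
The two translates `p₀ + [-nM, nN]` and `q₀ + [-nM, nN]` cover `[p₀ - nM, q₀ + nN]` as soon as
`q₀ - p₀ ≤ n(M + N) + 1`, and that interval contains the whole support of `gⁿ f`.
-/

open LaurentPolynomial
open scoped Pointwise

namespace LaurentPolynomial

variable {R : Type*} [Semiring R]

theorem support_coeff_mul_subset_Icc {a b : R[T;T⁻¹]} {p₁ q₁ p₂ q₂ : ℤ}
    (ha : a.coeff.support ⊆ Finset.Icc p₁ q₁) (hb : b.coeff.support ⊆ Finset.Icc p₂ q₂) :
    (a * b).coeff.support ⊆ Finset.Icc (p₁ + p₂) (q₁ + q₂) := by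
  classical
  calc (a * b).coeff.support ⊆ a.coeff.support + b.coeff.support :=
        AddMonoidAlgebra.support_coeff_mul_subset a b
    _ ⊆ Finset.Icc p₁ q₁ + Finset.Icc p₂ q₂ := Finset.add_subset_add ha hb
    _ ⊆ Finset.Icc (p₁ + p₂) (q₁ + q₂) := Finset.Icc_add_Icc_subset _ _ _ _

theorem coeff_sum_range_T_sub (M N : ℕ) (k : ℤ) :
    (∑ i ∈ Finset.range (M + N + 1), T ((i : ℤ) - M) : R[T;T⁻¹]).coeff k =
      if k ∈ Finset.Icc (-(M : ℤ)) N then 1 else 0 := by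
  simp only [AddMonoidAlgebra.coeff_sum, Finset.sum_apply', T_apply]
  split_ifs with hk <;> rw [Finset.mem_Icc] at hk
  · rw [Finset.sum_eq_single_of_mem (k + M).toNat (Finset.mem_range.2 (by omega))]
    · exact if_pos (by omega)
    · exact fun i _ hi => if_neg (by omega)
  · exact Finset.sum_eq_zero fun i hi => if_neg (by rw [Finset.mem_range] at hi; omega)

variable [PartialOrder R]

theorem exists_support_subset_Icc_coeff_pos {f : R[T;T⁻¹]} (hf : f ≠ 0)
    (hpos : ∀ k, 0 ≤ f.coeff k) :
    ∃ p q, f.coeff.support ⊆ Finset.Icc p q ∧ 0 < f.coeff p ∧ 0 < f.coeff q := by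
  have hne : f.coeff.support.Nonempty :=
    Finsupp.support_nonempty_iff.2 (mt AddMonoidAlgebra.coeff_eq_zero.1 hf)
  have coeff_pos {k : ℤ} (hk : k ∈ f.coeff.support) : 0 < f.coeff k :=
    (hpos k).lt_of_ne (Finsupp.mem_support_iff.1 hk).symm
  exact ⟨_, _, fun k hk => Finset.mem_Icc.2 ⟨Finset.min'_le _ k hk, Finset.le_max' _ k hk⟩,
    coeff_pos (Finset.min'_mem _ hne), coeff_pos (Finset.max'_mem _ hne)⟩

section OrderedSemiring

variable [IsOrderedRing R] {a b : R[T;T⁻¹]}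

theorem coeff_mul_nonneg (ha : ∀ k, 0 ≤ a.coeff k) (hb : ∀ k, 0 ≤ b.coeff k) (k : ℤ) :
    0 ≤ (a * b).coeff k := by
  classical
  rw [AddMonoidAlgebra.coeff_mul]
  exact Finsupp.sum_nonneg' fun i => Finsupp.sum_nonneg' fun j =>
    ite_nonneg (mul_nonneg (ha i) (hb j)) le_rfl

theorem coeff_mul_le_coeff_mul_add (ha : ∀ k, 0 ≤ a.coeff k) (hb : ∀ k, 0 ≤ b.coeff k)
    (i j : ℤ) : a.coeff i * b.coeff j ≤ (a * b).coeff (i + j) := by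
  classical
  by_cases hi : a.coeff i = 0
  · simpa [hi] using coeff_mul_nonneg ha hb (i + j)
  by_cases hj : b.coeff j = 0
  · simpa [hj] using coeff_mul_nonneg ha hb (i + j)
  have term_nonneg (i' j' : ℤ) :
      0 ≤ if i' + j' = i + j then a.coeff i' * b.coeff j' else 0 :=
    ite_nonneg (mul_nonneg (ha i') (hb j')) le_rfl
  rw [AddMonoidAlgebra.coeff_mul]
  calc a.coeff i * b.coeff j = if i + j = i + j then a.coeff i * b.coeff j else 0 :=
        (if_pos rfl).symm
    _ ≤ b.coeff.sum fun j' r => if i + j' = i + j then a.coeff i * r else 0 :=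
        Finset.single_le_sum (fun j' _ => term_nonneg i j') (Finsupp.mem_support_iff.2 hj)
    _ ≤ _ :=
        Finset.single_le_sum (fun i' _ => Finset.sum_nonneg fun j' _ => term_nonneg i' j')
          (Finsupp.mem_support_iff.2 hi)

end OrderedSemiring

theorem coeff_mul_pos [IsStrictOrderedRing R] {a b : R[T;T⁻¹]} (ha : ∀ k, 0 ≤ a.coeff k)
    (hb : ∀ k, 0 ≤ b.coeff k) {i j k : ℤ} (hi : 0 < a.coeff i) (hj : 0 < b.coeff j)
    (hk : i + j = k) : 0 < (a * b).coeff k :=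
  hk ▸ (mul_pos hi hj).trans_le (coeff_mul_le_coeff_mul_add ha hb i j)

/-- The paper's gap-free Laurent polynomials with `deg₋ = p` and `deg₊ = q`. -/
structure IsGapFreeOn (a : R[T;T⁻¹]) (p q : ℤ) : Prop where
  le : p ≤ q
  nonneg : ∀ k, 0 ≤ a.coeff k
  support_subset : a.coeff.support ⊆ Finset.Icc p q
  pos : ∀ k ∈ Finset.Icc p q, 0 < a.coeff k

namespace IsGapFreeOn

theorem pos_of_coeff_ne_zero {a : R[T;T⁻¹]} {p₁ q₁ : ℤ} (h : IsGapFreeOn a p₁ q₁) {p q k : ℤ}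
    (hp : a.coeff p ≠ 0) (hq : a.coeff q ≠ 0) (hpk : p ≤ k) (hkq : k ≤ q) : 0 < a.coeff k := by
  have hp' := Finset.mem_Icc.1 (h.support_subset (Finsupp.mem_support_iff.2 hp))
  have hq' := Finset.mem_Icc.1 (h.support_subset (Finsupp.mem_support_iff.2 hq))
  exact h.pos k (Finset.mem_Icc.2 ⟨hp'.1.trans hpk, hkq.trans hq'.2⟩)

variable [IsStrictOrderedRing R] {a b : R[T;T⁻¹]} {p₁ q₁ p₂ q₂ : ℤ}

theorem mul (ha : IsGapFreeOn a p₁ q₁) (hb : IsGapFreeOn b p₂ q₂) :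
    IsGapFreeOn (a * b) (p₁ + p₂) (q₁ + q₂) where
  le := add_le_add ha.le hb.le
  nonneg := coeff_mul_nonneg ha.nonneg hb.nonneg
  support_subset := support_coeff_mul_subset_Icc ha.support_subset hb.support_subset
  pos k hk := by
    obtain ⟨hlo, hhi⟩ := Finset.mem_Icc.1 hk
    have hp₁ := ha.le
    have hp₂ := hb.le
    refine coeff_mul_pos ha.nonneg hb.nonneg (i := max p₁ (k - q₂)) (j := k - max p₁ (k - q₂))
      (ha.pos _ (Finset.mem_Icc.2 ⟨?_, ?_⟩)) (hb.pos _ (Finset.mem_Icc.2 ⟨?_, ?_⟩)) (by ring) <;>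
      omega

theorem one : IsGapFreeOn (1 : R[T;T⁻¹]) 0 0 where
  le := le_rfl
  nonneg k := by
    rw [← T_zero, T_apply]
    split_ifs <;> simp
  support_subset k hk := by
    rw [← T_zero, Finsupp.mem_support_iff, T_apply] at hk
    simp_all
  pos k hk := by
    obtain rfl : k = 0 := by simpa using hk
    simp [← T_zero]

theorem pow (h : IsGapFreeOn a p₁ q₁) (n : ℕ) : IsGapFreeOn (a ^ n) (n * p₁) (n * q₁) := by
  induction n with
  | zero => simpa using one
  | succ n ih =>
    rw [pow_succ]
    convert ih.mul h using 1 <;> push_cast <;> ring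

theorem mul_of_coeff_endpoints_pos (ha : IsGapFreeOn a p₁ q₁) (hb : ∀ k, 0 ≤ b.coeff k)
    (hsupp : b.coeff.support ⊆ Finset.Icc p₂ q₂) (hp₂ : 0 < b.coeff p₂) (hq₂ : 0 < b.coeff q₂)
    (hgap : q₂ - p₂ ≤ q₁ - p₁ + 1) : IsGapFreeOn (a * b) (p₁ + p₂) (q₁ + q₂) where
  le := add_le_add ha.le (Finset.mem_Icc.1 (hsupp (Finsupp.mem_support_iff.2 hq₂.ne'))).1
  nonneg := coeff_mul_nonneg ha.nonneg hb
  support_subset := support_coeff_mul_subset_Icc ha.support_subset hsupp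
  pos k hk := by
    obtain ⟨hlo, hhi⟩ := Finset.mem_Icc.1 hk
    have hp₁ := ha.le
    by_cases hkp : k ≤ q₁ + p₂
    · exact coeff_mul_pos ha.nonneg hb (ha.pos (k - p₂) (Finset.mem_Icc.2 ⟨by omega, by omega⟩))
        hp₂ (sub_add_cancel k p₂)
    · exact coeff_mul_pos ha.nonneg hb (ha.pos (k - q₂) (Finset.mem_Icc.2 ⟨by omega, by omega⟩))
        hq₂ (sub_add_cancel k q₂)

end IsGapFreeOn

theorem isGapFreeOn_sum_range_T_sub [IsStrictOrderedRing R] (M N : ℕ) :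
    IsGapFreeOn (∑ i ∈ Finset.range (M + N + 1), T ((i : ℤ) - M) : R[T;T⁻¹]) (-M) N where
  le := by omega
  nonneg k := by
    rw [coeff_sum_range_T_sub]
    split_ifs <;> simp
  support_subset k hk := by
    rw [Finsupp.mem_support_iff, coeff_sum_range_T_sub] at hk
    by_contra hk'
    exact hk (if_neg hk')
  pos k hk := by
    rw [coeff_sum_range_T_sub, if_pos hk]
    exact one_pos

end LaurentPolynomial

theorem stmt7_general (f : LaurentPolynomial ℝ) (hf : f ≠ 0) (hpos : ∀ k : ℤ, 0 ≤ f.coeff k)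
    (M N : ℕ) (hM : 0 < M) :
    ∃ n₀ : ℕ, ∀ n ≥ n₀,
      ∀ p q k : ℤ,
        (((∑ i ∈ Finset.range (M + N + 1), T ((i : ℤ) - (M : ℤ))) : LaurentPolynomial ℝ) ^ n
            * f).coeff p ≠ 0 →
        (((∑ i ∈ Finset.range (M + N + 1), T ((i : ℤ) - (M : ℤ))) : LaurentPolynomial ℝ) ^ n
            * f).coeff q ≠ 0 →
        p ≤ k → k ≤ q →
        0 < (((∑ i ∈ Finset.range (M + N + 1), T ((i : ℤ) - (M : ℤ))) : LaurentPolynomial ℝ) ^ n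
            * f).coeff k := by
  obtain ⟨p₀, q₀, hsupp, hp₀, hq₀⟩ := exists_support_subset_Icc_coeff_pos hf hpos
  refine ⟨(q₀ - p₀).toNat, fun n hn p q k hp hq hpk hkq => ?_⟩
  have hgap : q₀ - p₀ ≤ n * (N : ℤ) - n * (-(M : ℤ)) + 1 := by
    have hn' : q₀ - p₀ ≤ n := (Int.self_le_toNat _).trans (by exact_mod_cast hn)
    have hnM : (n : ℤ) ≤ n * M := le_mul_of_one_le_right (by positivity) (by exact_mod_cast hM)
    have hnN : 0 ≤ (n : ℤ) * N := by positivity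
    linarith
  exact ((isGapFreeOn_sum_range_T_sub M N).pow n |>.mul_of_coeff_endpoints_pos hpos hsupp hp₀ hq₀
    hgap).pos_of_coeff_ne_zero hp hq hpk hkq

/-- Let `f` be a nonzero Laurent polynomial with nonnegative real coefficients and
`M, N > 0`. For all large enough `n`, the product `(X^{−M} + X^{−M+1} + ⋯ + X^N)^n · f`
is gap-free: every coefficient between two nonzero coefficients is strictly positive. -/
theorem stmt7 (f : LaurentPolynomial ℝ) (hf : f ≠ 0) (hpos : ∀ k : ℤ, 0 ≤ f.coeff k)
    (M N : ℕ) (hM : 0 < M) (hN : 0 < N) :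
    ∃ n₀ : ℕ, ∀ n ≥ n₀,
      ∀ p q k : ℤ,
        (((∑ i ∈ Finset.range (M + N + 1), T ((i : ℤ) - (M : ℤ))) : LaurentPolynomial ℝ) ^ n
            * f).coeff p ≠ 0 →
        (((∑ i ∈ Finset.range (M + N + 1), T ((i : ℤ) - (M : ℤ))) : LaurentPolynomial ℝ) ^ n
            * f).coeff q ≠ 0 →
        p ≤ k → k ≤ q →
        0 < (((∑ i ∈ Finset.range (M + N + 1), T ((i : ℤ) - (M : ℤ))) : LaurentPolynomial ℝ) ^ n
            * f).coeff k :=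
  stmt7_general f hf hpos M N hM
end

section
/- Let f ∈ ℝ[X^{±}] be a Laurent polynomial such that f(r) > 0 for all real r > 0, and such that both the positive leading coefficient lc₊(f) and the negative leading coefficient lc₋(f) are strictly positive. Then there exists a nonzero Laurent polynomial g with nonnegative coefficients such that f·g has nonnegative coefficients (and is nonzero). -/
/-! Pólya's argument. Up to a power of `T`, `f` is a polynomial `P = ∑ₖ aₖ Xᵏ` of degree `d`
that is positive on `[0, ∞)` with positive leading coefficient, and `g = (1 + X) ^ N` works for
large `N`. With `M = N + d` and `s = i / M`, the `i`-th coefficient of `(1 + X) ^ N * P` is a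
positive multiple of `∑ₖ aₖ ∏_{j<k} (s - j/M) ∏_{j<d-k} (1 - s - j/M)`. As `M → ∞` this tends,
uniformly in `s ∈ [0, 1]`, to the homogenization `∑ₖ aₖ sᵏ (1 - s)^(d-k) = (1 - s)^d P(s/(1 - s))`,
which is bounded below by a positive constant on the compact interval `[0, 1]`. -/

open LaurentPolynomial

/-- Evaluation of a real Laurent polynomial at a (positive) real number. -/
noncomputable def evalAt (f : LaurentPolynomial ℝ) (r : ℝ) : ℝ :=
  f.coeff.support.sum fun k => f.coeff k * r ^ k

open Finset Polynomial Filter Topology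
open scoped Nat

lemma Nat.choose_mul_factorial_mul_factorial_eq_descFactorial {N d i k : ℕ} (hk : k ≤ d)
    (hki : k ≤ i) (hi : i ≤ N + d) :
    N.choose (i - k) * i ! * (N + d - i)! =
      N ! * i.descFactorial k * (N + d - i).descFactorial (d - k) := by
  rcases le_or_gt (i - k) N with h | h
  · rw [← Nat.factorial_mul_descFactorial hki, ← Nat.factorial_mul_descFactorial
      (show d - k ≤ N + d - i by omega), show N + d - i - (d - k) = N - (i - k) by omega,
      ← Nat.choose_mul_factorial_mul_factorial h]
    ring
  · rw [Nat.choose_eq_zero_of_lt h,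
      Nat.descFactorial_eq_zero_iff_lt.mpr (show N + d - i < d - k by omega)]
    simp

namespace Polynomial

noncomputable def fallingHomogenization (P : ℝ[X]) (d : ℕ) (h x y : ℝ) : ℝ :=
  ∑ k ∈ range (d + 1),
    P.coeff k * (∏ j ∈ range k, (x - j * h)) * ∏ j ∈ range (d - k), (y - j * h)

variable (P : ℝ[X]) (d : ℕ)

lemma fallingHomogenization_zero (x y : ℝ) :
    P.fallingHomogenization d 0 x y = ∑ k ∈ range (d + 1), P.coeff k * x ^ k * y ^ (d - k) := by
  simp [fallingHomogenization]

lemma fallingHomogenization_mul (c h x y : ℝ) :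
    P.fallingHomogenization d (c * h) (c * x) (c * y) =
      c ^ d * P.fallingHomogenization d h x y := by
  have hprod (z : ℝ) (n : ℕ) :
      ∏ j ∈ range n, (c * z - j * (c * h)) = c ^ n * ∏ j ∈ range n, (z - j * h) := by
    simp_rw [show ∀ j : ℕ, c * z - j * (c * h) = c * (z - j * h) from fun j => by ring]
    rw [prod_mul_distrib, prod_const, card_range]
  rw [fallingHomogenization, fallingHomogenization, mul_sum]
  refine sum_congr rfl fun k hk => ?_
  rw [hprod, hprod, ← pow_mul_pow_sub c (Nat.lt_succ_iff.mp (mem_range.mp hk))]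
  ring

lemma fallingHomogenization_one_natCast (i m : ℕ) :
    P.fallingHomogenization d 1 i m =
      ∑ k ∈ range (d + 1), P.coeff k * i.descFactorial k * m.descFactorial (d - k) := by
  simp only [fallingHomogenization, mul_one, ← descPochhammer_eval_eq_prod_range,
    descPochhammer_eval_eq_descFactorial]

lemma continuous_fallingHomogenization :
    Continuous fun p : ℝ × ℝ => P.fallingHomogenization d p.1 p.2 (1 - p.2) := by
  unfold fallingHomogenization
  fun_prop

lemma sum_coeff_mul_pow_mul_pow_eq_pow_mul_eval_div (hd : P.natDegree ≤ d) (x : ℝ) {y : ℝ}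
    (hy : y ≠ 0) :
    ∑ k ∈ range (d + 1), P.coeff k * x ^ k * y ^ (d - k) = y ^ d * P.eval (x / y) := by
  rw [eval_eq_sum_range' (Nat.lt_succ_of_le hd), mul_sum]
  refine sum_congr rfl fun k hk => ?_
  rw [div_pow, ← pow_mul_pow_sub y (Nat.lt_succ_iff.mp (mem_range.mp hk))]
  field_simp

lemma coeff_one_add_X_pow_mul (hd : P.natDegree ≤ d) (N i : ℕ) :
    ((1 + X) ^ N * P).coeff i =
      ∑ k ∈ range (d + 1), P.coeff k * if k ≤ i then (N.choose (i - k) : ℝ) else 0 := by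
  conv_lhs => rw [P.as_sum_range' (d + 1) (Nat.lt_succ_of_le hd)]
  simp only [mul_sum, finsetSum_coeff, ← C_mul_X_pow_eq_monomial, mul_left_comm _ (C _),
    coeff_C_mul, coeff_mul_X_pow', coeff_one_add_X_pow]

lemma factorial_mul_coeff_one_add_X_pow_mul (hd : P.natDegree ≤ d) {N i : ℕ}
    (hi : i ≤ N + d) :
    (i ! * (N + d - i)! : ℝ) * ((1 + X) ^ N * P).coeff i =
      N ! * P.fallingHomogenization d 1 i (N + d - i : ℕ) := by
  rw [coeff_one_add_X_pow_mul P d hd, fallingHomogenization_one_natCast, mul_sum, mul_sum]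
  refine sum_congr rfl fun k hk => ?_
  split_ifs with hki
  · have h := congrArg (Nat.cast : ℕ → ℝ)
      (Nat.choose_mul_factorial_mul_factorial_eq_descFactorial
        (Nat.lt_succ_iff.mp (mem_range.mp hk)) hki hi)
    push_cast at h
    linear_combination P.coeff k * h
  · rw [Nat.descFactorial_eq_zero_iff_lt.mpr (not_le.mp hki)]
    simp

lemma coeff_one_add_X_pow_mul_eq_zero (hd : P.natDegree ≤ d) {N i : ℕ} (hi : N + d < i) :
    ((1 + X) ^ N * P).coeff i = 0 := by
  rw [coeff_one_add_X_pow_mul P d hd]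
  refine sum_eq_zero fun k hk => ?_
  rw [Nat.choose_eq_zero_of_lt (show N < i - k by have := mem_range.mp hk; omega)]
  simp

theorem exists_coeff_one_add_X_pow_mul_nonneg (hd : P.natDegree ≤ d)
    (hF : ∀ s ∈ Set.Icc (0 : ℝ) 1, 0 < P.fallingHomogenization d 0 s (1 - s)) :
    ∃ N : ℕ, ∀ i, 0 ≤ ((1 + X) ^ N * P).coeff i := by
  have hnear : ∀ᶠ h in 𝓝 (0 : ℝ), ∀ s ∈ Set.Icc (0 : ℝ) 1,
      0 < P.fallingHomogenization d h s (1 - s) :=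
    isCompact_Icc.eventually_forall_of_forall_eventually fun s hs =>
      (continuous_fallingHomogenization P d).continuousAt.eventually (lt_mem_nhds (hF s hs))
  have hlim : Tendsto (fun N : ℕ => ((N + d : ℕ) : ℝ)⁻¹) atTop (𝓝 0) :=
    tendsto_inv_atTop_zero.comp (tendsto_natCast_atTop_atTop.comp (tendsto_add_atTop_nat d))
  obtain ⟨N, hN1, hN⟩ := ((eventually_ge_atTop 1).and (hlim.eventually hnear)).exists
  refine ⟨N, fun i => ?_⟩
  rcases le_or_gt i (N + d) with hi | hi
  · set M : ℝ := ((N + d : ℕ) : ℝ)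
    have hM : 0 < M := by positivity
    have hs : M⁻¹ * i ∈ Set.Icc (0 : ℝ) 1 :=
      ⟨by positivity, inv_mul_le_one_of_le₀ (by simp only [M]; exact_mod_cast hi) hM.le⟩
    have hscale := P.fallingHomogenization_mul d M⁻¹ 1 i (N + d - i : ℕ)
    rw [mul_one, show M⁻¹ * ((N + d - i : ℕ) : ℝ) = 1 - M⁻¹ * i by
      rw [Nat.cast_sub hi, mul_sub, inv_mul_cancel₀ hM.ne']] at hscale
    have hF1 : 0 < P.fallingHomogenization d 1 i (N + d - i : ℕ) :=
      pos_of_mul_pos_right (hscale ▸ hN _ hs) (by positivity)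
    have hprod : 0 < (i ! * (N + d - i)! : ℝ) * ((1 + X) ^ N * P).coeff i := by
      rw [factorial_mul_coeff_one_add_X_pow_mul P d hd hi]
      exact mul_pos (by positivity) hF1
    exact (pos_of_mul_pos_right hprod (by positivity)).le
  · rw [coeff_one_add_X_pow_mul_eq_zero P d hd hi]

theorem exists_coeff_one_add_X_pow_mul_nonneg_of_eval_pos (hl : 0 < P.leadingCoeff)
    (hpos : ∀ t, 0 ≤ t → 0 < P.eval t) : ∃ N : ℕ, ∀ i, 0 ≤ ((1 + X) ^ N * P).coeff i := by
  refine P.exists_coeff_one_add_X_pow_mul_nonneg _ le_rfl fun s hs => ?_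
  rw [fallingHomogenization_zero]
  rcases hs.2.eq_or_lt with rfl | hs1
  · rw [sum_eq_single_of_mem P.natDegree (self_mem_range_succ _)]
    · simpa using hl
    · intro k hk hne
      have : P.natDegree - k ≠ 0 := by have := mem_range.mp hk; omega
      simp [this]
  · rw [sum_coeff_mul_pow_mul_pow_eq_pow_mul_eval_div P _ le_rfl s (sub_pos.mpr hs1).ne']
    exact mul_pos (pow_pos (sub_pos.mpr hs1) _) (hpos _ (div_nonneg hs.1 (sub_pos.mpr hs1).le))

end Polynomial

namespace LaurentPolynomial

variable {R : Type*} [Semiring R]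

lemma coeff_toLaurent_natCast (P : R[X]) (n : ℕ) : (toLaurent P).coeff n = P.coeff n :=
  Finsupp.mapDomain_apply Nat.castEmbedding.injective _ n

lemma coeff_toLaurent_of_neg (P : R[X]) {k : ℤ} (hk : k < 0) : (toLaurent P).coeff k = 0 :=
  Finsupp.mapDomain_of_notMem_range _ _ <| by
    rintro ⟨n, rfl⟩
    exact (Int.natCast_nonneg n).not_gt hk

lemma coeff_mul_T (f : R[T;T⁻¹]) (m k : ℤ) : (f * T m).coeff k = f.coeff (k - m) := by
  simpa [sub_eq_add_neg] using AddMonoidAlgebra.coeff_mul_single_apply f (1 : R) m k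

lemma coeff_toLaurent_mul_T_natCast_add (P : R[X]) (n : ℕ) (m : ℤ) :
    (toLaurent P * T m).coeff (n + m) = P.coeff n := by
  rw [coeff_mul_T, add_sub_cancel_right, coeff_toLaurent_natCast]

lemma toLaurent_trunc (f : R[T;T⁻¹]) (hf : ∀ k < 0, f.coeff k = 0) :
    toLaurent (trunc f) = f := by
  ext (n | n)
  · exact coeff_toLaurent_natCast _ n
  · rw [coeff_toLaurent_of_neg _ (Int.negSucc_lt_zero n), hf _ (Int.negSucc_lt_zero n)]

lemma exists_toLaurent_mul_T_eq_of_lc_pos {f : ℝ[T;T⁻¹]}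
    (hlcp : ∃ k : ℤ, 0 < f.coeff k ∧ ∀ j : ℤ, k < j → f.coeff j = 0)
    (hlcm : ∃ k : ℤ, 0 < f.coeff k ∧ ∀ j : ℤ, j < k → f.coeff j = 0) :
    ∃ (P : ℝ[X]) (m : ℤ), toLaurent P * T m = f ∧ 0 < P.coeff 0 ∧ 0 < P.leadingCoeff := by
  obtain ⟨m, hm_pos, hm_zero⟩ := hlcm
  obtain ⟨e, he_pos, he_zero⟩ := hlcp
  set P := trunc (f * T (-m))
  have hfP : toLaurent P * T m = f := by
    rw [toLaurent_trunc _ fun k hk => by rw [coeff_mul_T]; exact hm_zero _ (by omega),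
      mul_T_assoc, neg_add_cancel, T_zero, mul_one]
  have hcoeff (n : ℕ) : P.coeff n = f.coeff (n + m) := by
    rw [← hfP, coeff_toLaurent_mul_T_natCast_add]
  obtain ⟨d, rfl⟩ : ∃ d : ℕ, e = d + m :=
    ⟨(e - m).toNat, by have := le_of_not_gt fun h => he_pos.ne' (hm_zero e h); omega⟩
  have hdeg : P.natDegree = d := by
    refine natDegree_eq_of_le_of_coeff_ne_zero ?_ (by rw [hcoeff]; exact he_pos.ne')
    exact natDegree_le_iff_coeff_eq_zero.mpr fun j hj => by
      rw [hcoeff]; exact he_zero _ (by omega)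
  refine ⟨P, m, hfP, by simpa [hcoeff] using hm_pos, ?_⟩
  rw [leadingCoeff, hdeg, hcoeff]
  exact he_pos

lemma coeff_toLaurent_nonneg {P : ℝ[X]} (hP : ∀ n, 0 ≤ P.coeff n) (k : ℤ) :
    0 ≤ (toLaurent P).coeff k := by
  rcases lt_or_ge k 0 with hk | hk
  · rw [coeff_toLaurent_of_neg P hk]
  · obtain ⟨n, hn⟩ := Int.eq_ofNat_of_zero_le hk
    rw [hn, coeff_toLaurent_natCast]
    exact hP n

end LaurentPolynomial

lemma evalAt_eq_eval₂ {r : ℝ} (hr : r ≠ 0) (f : ℝ[T;T⁻¹]) :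
    evalAt f r = eval₂ (RingHom.id ℝ) (Units.mk0 r hr) f := by
  have hsm : ∀ g : ℝ[T;T⁻¹], evalAt g r = g.smeval (Units.mk0 r hr) := fun g => by
    rw [evalAt, LaurentPolynomial.smeval_eq_sum, Finsupp.sum]
    simp
  rw [hsm]
  induction f using LaurentPolynomial.induction_on' with
  | add p q hp hq => rw [LaurentPolynomial.smeval_add, map_add, hp, hq]
  | C_mul_T n a => simp [eval₂_C_mul_T]

lemma evalAt_toLaurent_mul_T {r : ℝ} (hr : r ≠ 0) (P : ℝ[X]) (m : ℤ) :
    evalAt (toLaurent P * T m) r = P.eval r * r ^ m := by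
  simp [evalAt_eq_eval₂ hr, eval₂_T]

/-- Handelman's theorem: if `f ∈ ℝ[X^±]` satisfies `f(r) > 0` for all `r > 0` and its
positive and negative leading coefficients are strictly positive (expressed as: there is a
top-degree nonzero coefficient which is positive, and similarly a bottom-degree one), then
some nonzero Laurent polynomial `g` with nonnegative coefficients makes `f·g` nonzero with
nonnegative coefficients. -/
theorem stmt10 (f : LaurentPolynomial ℝ)
    (hval : ∀ r : ℝ, 0 < r → 0 < evalAt f r)
    (hlcp : ∃ k : ℤ, 0 < f.coeff k ∧ ∀ j : ℤ, k < j → f.coeff j = 0)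
    (hlcm : ∃ k : ℤ, 0 < f.coeff k ∧ ∀ j : ℤ, j < k → f.coeff j = 0) :
    ∃ g : LaurentPolynomial ℝ, g ≠ 0 ∧ (∀ k : ℤ, 0 ≤ g.coeff k) ∧
      f * g ≠ 0 ∧ (∀ k : ℤ, 0 ≤ (f * g).coeff k) := by
  obtain ⟨P, m, rfl, hP0, hPl⟩ := exists_toLaurent_mul_T_eq_of_lc_pos hlcp hlcm
  have hpos (t : ℝ) (ht : 0 ≤ t) : 0 < P.eval t := by
    rcases ht.eq_or_lt with rfl | ht
    · rwa [← coeff_zero_eq_eval_zero]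
    · have := hval t ht
      rw [evalAt_toLaurent_mul_T ht.ne'] at this
      exact pos_of_mul_pos_left this (zpow_pos ht m).le
  obtain ⟨N, hN⟩ := P.exists_coeff_one_add_X_pow_mul_nonneg_of_eval_pos hPl hpos
  have hB : (1 + X : ℝ[X]) ^ N ≠ 0 :=
    pow_ne_zero _ (by simpa [add_comm] using X_add_C_ne_zero (1 : ℝ))
  have hfg : toLaurent P * T m * toLaurent ((1 + X) ^ N) =
      toLaurent ((1 + X) ^ N * P) * T m := by
    rw [map_mul]
    ring
  refine ⟨toLaurent ((1 + X) ^ N), toLaurent_ne_zero.mpr hB,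
    coeff_toLaurent_nonneg fun n => by rw [coeff_one_add_X_pow]; positivity, ?_, fun k => ?_⟩
  · rw [hfg]
    exact mul_ne_zero (toLaurent_ne_zero.mpr (mul_ne_zero hB (leadingCoeff_ne_zero.mp hPl.ne')))
      (isUnit_T m).ne_zero
  · rw [hfg, coeff_mul_T]
    exact coeff_toLaurent_nonneg hN _
end

section
/- Let C ⊂ ℝ_{>0} be a compact set and let ℳ ⊆ (ℝ[X^{±}])^n be an ℝ[X^{±}]-submodule. Suppose for every r ∈ C there exists f_r ∈ ℳ with all n coordinates of f_r(r) strictly positive. Then there exists a single f_C ∈ ℳ such that all coordinates of f_C(x) are strictly positive for every x ∈ C. -/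
/-!
Each `f_r` stays positive on an open neighbourhood of `r`; compactness leaves finitely many of
them, and gluing them with continuous bump weights supported on those neighbourhoods gives a
combination positive on all of `C`. Positivity of a combination on a compact set survives
uniformly small changes of the weights, so by Weierstrass the bumps can be replaced by
polynomials, which act on the module through `toLaurent`.
-/

open LaurentPolynomial

open Filter Topology Polynomial

section Weights

variable {ι κ : Type*}

theorem exists_continuous_weights_sum_mul_pos {E : Type*} [NormedAddCommGroup E]
    [NormedSpace ℝ E] [FiniteDimensional ℝ E] (s : Finset ι) {C : Set E} {U : ι → Set E}
    (hU : ∀ k, IsOpen (U k)) (hCU : C ⊆ ⋃ k ∈ s, U k) {g : ι → κ → E → ℝ}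
    (hg : ∀ k, ∀ x ∈ U k, ∀ i, 0 < g k i x) :
    ∃ ψ : ι → E → ℝ, (∀ k, Continuous (ψ k)) ∧ ∀ x ∈ C, ∀ i, 0 < ∑ k ∈ s, ψ k x * g k i x := by
  choose ψ hψU hψ hψI using fun k => (hU k).exists_contDiff_support_eq (n := 0)
  have hψnonneg : ∀ k x, 0 ≤ ψ k x := fun k x => (hψI k ⟨x, rfl⟩).1
  refine ⟨ψ, fun k => (hψ k).continuous, fun x hx i => ?_⟩
  obtain ⟨k, hks, hxk⟩ := Set.mem_iUnion₂.mp (hCU hx)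
  have hterm : ∀ l, 0 ≤ ψ l x * g l i x := fun l => by
    by_cases hxl : x ∈ U l
    · exact mul_nonneg (hψnonneg l x) (hg l x hxl i).le
    · rw [← hψU l, Function.notMem_support] at hxl
      simp [hxl]
  have hψk : 0 < ψ k x := (hψnonneg k x).lt_of_ne' (by rwa [← hψU k] at hxk)
  exact Finset.sum_pos' (fun l _ => hterm l) ⟨k, hks, mul_pos hψk (hg k x hxk i)⟩

theorem eventually_sum_mul_pos_of_forall_abs_sub_lt {X : Type*} [TopologicalSpace X]
    (s : Finset ι) {C : Set X} (hC : IsCompact C) {ψ g : ι → X → ℝ}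
    (hψ : ∀ k, ContinuousOn (ψ k) C) (hg : ∀ k, ContinuousOn (g k) C)
    (hpos : ∀ x ∈ C, 0 < ∑ k ∈ s, ψ k x * g k x) :
    ∀ᶠ ε in 𝓝[>] 0, ∀ q : ι → X → ℝ, (∀ k, ∀ x ∈ C, |q k x - ψ k x| < ε) →
      ∀ x ∈ C, 0 < ∑ k ∈ s, q k x * g k x := by
  obtain ⟨δ, hδ, hδle⟩ := hC.exists_forall_le'
    (continuousOn_finsetSum s fun k _ => (hψ k).mul (hg k)) hpos
  obtain ⟨B, hB⟩ := hC.bddAbove_image (continuousOn_finsetSum s fun k _ => (hg k).abs)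
  have hεB : Tendsto (fun ε => ε * B) (𝓝[>] 0) (𝓝 0) :=
    tendsto_nhdsWithin_of_tendsto_nhds (by simpa using (continuous_mul_const B).tendsto 0)
  filter_upwards [self_mem_nhdsWithin, hεB.eventually (gt_mem_nhds hδ)] with ε hε hεδ q hq x hx
  have hterm : ∀ k, ψ k x * g k x - ε * |g k x| ≤ q k x * g k x := fun k => by
    have h1 : (ψ k x - q k x) * g k x ≤ |q k x - ψ k x| * |g k x| := by
      rw [abs_sub_comm, ← abs_mul]; exact le_abs_self _
    have h2 : |q k x - ψ k x| * |g k x| ≤ ε * |g k x| :=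
      mul_le_mul_of_nonneg_right (hq k x hx).le (abs_nonneg _)
    linarith
  have hsum : ∑ k ∈ s, |g k x| ≤ B := hB ⟨x, hx, rfl⟩
  calc 0 < δ - ε * B := by linarith
    _ ≤ ∑ k ∈ s, ψ k x * g k x - ε * ∑ k ∈ s, |g k x| := by
      gcongr
      · exact hδle x hx
      · exact hε.le
    _ ≤ ∑ k ∈ s, q k x * g k x := by
      rw [Finset.mul_sum, ← Finset.sum_sub_distrib]; exact Finset.sum_le_sum fun k _ => hterm k

theorem exists_polynomial_weights_sum_mul_pos [Finite κ] (s : Finset ι) {C : Set ℝ}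
    (hC : IsCompact C) {ψ : ι → ℝ → ℝ} (hψ : ∀ k, Continuous (ψ k)) {g : ι → κ → ℝ → ℝ}
    (hg : ∀ k i, ContinuousOn (g k i) C) (hpos : ∀ x ∈ C, ∀ i, 0 < ∑ k ∈ s, ψ k x * g k i x) :
    ∃ p : ι → ℝ[X], ∀ x ∈ C, ∀ i, 0 < ∑ k ∈ s, (p k).eval x * g k i x := by
  have hnear : ∀ᶠ ε in 𝓝[>] 0, 0 < ε ∧ ∀ i, ∀ q : ι → ℝ → ℝ,
      (∀ k, ∀ x ∈ C, |q k x - ψ k x| < ε) → ∀ x ∈ C, 0 < ∑ k ∈ s, q k x * g k i x :=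
    Filter.Eventually.and self_mem_nhdsWithin <| eventually_all.2 fun i =>
      eventually_sum_mul_pos_of_forall_abs_sub_lt s hC (fun k => (hψ k).continuousOn)
        (fun k => hg k i) fun x hx => hpos x hx i
  obtain ⟨ε, hε, hεnear⟩ := hnear.exists
  choose p hp using fun k => exists_polynomial_near_of_continuousOn (sInf C) (sSup C) (ψ k)
    (hψ k).continuousOn ε hε
  have hCIcc := subset_Icc_csInf_csSup hC.bddBelow hC.bddAbove
  exact ⟨p, fun x hx i => hεnear i (fun k x => (p k).eval x)
    (fun k y hy => hp k y (hCIcc hy)) x hx⟩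

end Weights

theorem evalAt_eq_sum (f : LaurentPolynomial ℝ) (x : ℝ) :
    evalAt f x = f.coeff.sum fun k a => a * x ^ k := rfl

theorem evalAt_add (f g : LaurentPolynomial ℝ) (x : ℝ) :
    evalAt (f + g) x = evalAt f x + evalAt g x := by
  simp only [evalAt_eq_sum, AddMonoidAlgebra.coeff_add]
  exact Finsupp.sum_add_index' (by simp) (by intros; ring)

theorem evalAt_eq_eval₂_s13 {x : ℝ} (hx : x ≠ 0) (f : LaurentPolynomial ℝ) :
    evalAt f x = eval₂ (RingHom.id ℝ) (Units.mk0 x hx) f := by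
  induction f using AddMonoidAlgebra.induction_linear with
  | zero => simp [evalAt]
  | add f g hf hg => rw [evalAt_add, map_add, hf, hg]
  | single k b =>
    rw [evalAt_eq_sum, AddMonoidAlgebra.coeff_single, Finsupp.sum_single_index (by simp),
      single_eq_C_mul_T, eval₂_C_mul_T]
    simp

theorem evalAt_sum_smul {ι κ : Type*} (s : Finset ι) (p : ι → ℝ[X])
    (f : ι → κ → LaurentPolynomial ℝ) (i : κ) {x : ℝ} (hx : x ≠ 0) :
    evalAt ((∑ k ∈ s, toLaurent (p k) • f k) i) x = ∑ k ∈ s, (p k).eval x * evalAt (f k i) x := by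
  simp only [evalAt_eq_eval₂_s13 hx, Finset.sum_apply, Pi.smul_apply, smul_eq_mul, map_sum, map_mul,
    eval₂_toLaurent, Polynomial.eval₂_id, Units.val_mk0]

theorem continuousOn_evalAt (f : LaurentPolynomial ℝ) : ContinuousOn (evalAt f) {0}ᶜ :=
  continuousOn_finsetSum _ fun k _ => continuousOn_const.mul fun x hx =>
    (continuousAt_zpow₀ x k (Or.inl hx)).continuousWithinAt

theorem isOpen_setOf_forall_evalAt_pos {κ : Type*} [Finite κ] (f : κ → LaurentPolynomial ℝ) :
    IsOpen {x | x ≠ 0 ∧ ∀ i, 0 < evalAt (f i) x} := by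
  convert (continuousOn_pi.2 fun i => continuousOn_evalAt (f i)).isOpen_inter_preimage
    isOpen_compl_singleton
    (isOpen_set_pi Set.finite_univ fun _ _ => isOpen_Ioi (a := (0 : ℝ))) using 1
  ext; simp

/-- Let `C ⊂ ℝ_{>0}` be compact and `ℳ` an `ℝ[X^±]`-submodule of `(ℝ[X^±])^n`. If for
every `r ∈ C` some `f_r ∈ ℳ` has all coordinates positive at `r`, then a single
`f_C ∈ ℳ` has all coordinates positive at every point of `C`. -/
theorem stmt13 (n : ℕ) (C : Set ℝ) (hCcompact : IsCompact C) (hCpos : C ⊆ Set.Ioi (0 : ℝ))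
    (ℳ : Submodule (LaurentPolynomial ℝ) (Fin n → LaurentPolynomial ℝ))
    (hloc : ∀ r ∈ C, ∃ f ∈ ℳ, ∀ i : Fin n, 0 < evalAt (f i) r) :
    ∃ f ∈ ℳ, ∀ x ∈ C, ∀ i : Fin n, 0 < evalAt (f i) x := by
  -- `f r` is junk for `r ∉ C`, so the subcover must be centred in `C`.
  choose! f hfM hfpos using hloc
  have hC0 : C ⊆ {0}ᶜ := fun x hx => (hCpos hx).ne'
  have hU := fun r => isOpen_setOf_forall_evalAt_pos (f r)
  obtain ⟨t, htC, hCt⟩ := hCcompact.elim_nhds_subcover _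
    fun r hr => (hU r).mem_nhds ⟨hC0 hr, hfpos r hr⟩
  obtain ⟨ψ, hψ, hψpos⟩ := exists_continuous_weights_sum_mul_pos t hU hCt fun r x hx => hx.2
  obtain ⟨p, hp⟩ := exists_polynomial_weights_sum_mul_pos t hCcompact hψ
    (fun r i => (continuousOn_evalAt _).mono hC0) hψpos
  refine ⟨∑ r ∈ t, toLaurent (p r) • f r,
    ℳ.sum_mem fun r hr => ℳ.smul_mem _ (hfM r (htC r hr)), fun x hx i => ?_⟩
  rw [evalAt_sum_smul t p f i (hC0 hx)]
  exact hp x hx i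
end
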